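/- The class of languages accepted by nondeterministic finite automata with translucent words (NFAwtws) is properly contained in the class of languages accepted by repetitive nondeterministic finite automata with translucent words (RNFAwtws): every language accepted by an NFAwtw is accepted by an RNFAwtw, and there is a language (for instance L_2lin = { a^{2n} b^{2n} : n ≥ 1 }) accepted by an RNFAwtw but by no NFAwtw. -/

import Mathlib

/-! Repetitive (non)deterministic finite automata with translucent words. -/

/-- Behavior of the automaton at the end-of-tape marker: halt accepting,
halt rejecting, or (in the repetitive case) continue in one of a set of states. -/
inductive EndBehavior (Q : Type) : Type where
  | accept : EndBehavior Q
  | reject : EndBehavior Q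
  | cont : Set Q → EndBehavior Q

/-- `InStar S w` means `w` belongs to the Kleene star `S*` of the set of words `S`. -/
def InStar {α : Type} (S : Set (List α)) (w : List α) : Prop :=
  ∃ l : List (List α), (∀ u ∈ l, u ∈ S) ∧ l.flatten = w

/-- A (repetitive) nondeterministic finite automaton with translucent words,
with state set `Q` over the alphabet `α`.  `tl q` is the set `τ(q)` of
translucent words of the state `q`, `delta` is the transition function and
`endB q` is the behavior at the end-of-tape marker.  The fields `tl_fin`,
`code_ne`, `prefix_code` and `tl_head` express that each `τ(q)` is finite,
that `τ(q) ∪ Σ_q` is a prefix code (no empty word, and no member is a proper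
prefix of another member), and that no word of `τ(q)` begins with a letter
readable in `q`. -/
structure RNFAwtw (α : Type) (Q : Type) : Type where
  init : Set Q
  tl : Q → Set (List α)
  delta : Q → α → Set Q
  endB : Q → EndBehavior Q
  tl_fin : ∀ q, (tl q).Finite
  code_ne : ∀ q, [] ∉ tl q
  prefix_code : ∀ q,
    ∀ u ∈ tl q ∪ {w | ∃ a, (delta q a).Nonempty ∧ w = [a]},
    ∀ v ∈ tl q ∪ {w | ∃ a, (delta q a).Nonempty ∧ w = [a]},
      u <+: v → u = v
  tl_head : ∀ q, ∀ t ∈ tl q, ∀ a, (delta q a).Nonempty → ¬ [a] <+: t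

/-- Configurations: a pair of a state and the remaining tape content, or one
of the two halting configurations. -/
inductive Conf (α Q : Type) : Type where
  | state : Q → List α → Conf α Q
  | accept : Conf α Q
  | reject : Conf α Q

/-- The single-step computation relation of an RNFAwtw. -/
inductive RNFAwtw.Step {α Q : Type} (A : RNFAwtw α Q) :
    Conf α Q → Conf α Q → Prop where
  | read {q q' : Q} {a : α} {u v : List α} :
      InStar (A.tl q) u → q' ∈ A.delta q a →
      RNFAwtw.Step A (Conf.state q (u ++ a :: v)) (Conf.state q' (u ++ v))
  | stuck {q : Q} {a : α} {u v : List α} :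
      InStar (A.tl q) u → A.delta q a = ∅ →
      (∀ t ∈ A.tl q, ¬ t <+: (a :: v)) →
      RNFAwtw.Step A (Conf.state q (u ++ a :: v)) Conf.reject
  | haltAccept {q : Q} {w : List α} :
      InStar (A.tl q) w → A.endB q = EndBehavior.accept →
      RNFAwtw.Step A (Conf.state q w) Conf.accept
  | haltReject {q : Q} {w : List α} :
      InStar (A.tl q) w → A.endB q = EndBehavior.reject →
      RNFAwtw.Step A (Conf.state q w) Conf.reject
  | goOn {q q' : Q} {w : List α} {S : Set Q} :
      InStar (A.tl q) w → A.endB q = EndBehavior.cont S → q' ∈ S →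
      RNFAwtw.Step A (Conf.state q w) (Conf.state q' w)

/-- `A` accepts the word `w`. -/
def RNFAwtw.Accepts {α Q : Type} (A : RNFAwtw α Q) (w : List α) : Prop :=
  ∃ q0 ∈ A.init, Relation.ReflTransGen A.Step (Conf.state q0 w) Conf.accept

/-- The language accepted by `A`. -/
def RNFAwtw.lang {α Q : Type} (A : RNFAwtw α Q) : Set (List α) :=
  { w | A.Accepts w }

/-- `A` is deterministic: one initial state, at most one transition per
state/letter pair, and at the end-of-tape marker the continuation (if any)
is a single state. -/
def RNFAwtw.Deterministic {α Q : Type} (A : RNFAwtw α Q) : Prop :=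
  (∃ q0, A.init = {q0}) ∧
  (∀ q a, (A.delta q a).Subsingleton) ∧
  (∀ q S, A.endB q = EndBehavior.cont S → ∃ q', S = {q'})

/-- `A` is non-repetitive: at the end-of-tape marker it always halts. -/
def RNFAwtw.NonRepetitive {α Q : Type} (A : RNFAwtw α Q) : Prop :=
  ∀ q S, A.endB q ≠ EndBehavior.cont S

/-- `L` is accepted by some repetitive NFAwtw (with a finite state set). -/
def AcceptedByRNFAwtw {α : Type} (L : Set (List α)) : Prop :=
  ∃ (Q : Type) (_ : Finite Q) (A : RNFAwtw α Q), A.lang = L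

/-- `L` is accepted by some repetitive DFAwtw. -/
def AcceptedByRDFAwtw {α : Type} (L : Set (List α)) : Prop :=
  ∃ (Q : Type) (_ : Finite Q) (A : RNFAwtw α Q), A.Deterministic ∧ A.lang = L

/-- `L` is accepted by some (non-repetitive) NFAwtw. -/
def AcceptedByNFAwtw {α : Type} (L : Set (List α)) : Prop :=
  ∃ (Q : Type) (_ : Finite Q) (A : RNFAwtw α Q), A.NonRepetitive ∧ A.lang = L

/-- `L` is accepted by some (non-repetitive) DFAwtw. -/
def AcceptedByDFAwtw {α : Type} (L : Set (List α)) : Prop :=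
  ∃ (Q : Type) (_ : Finite Q) (A : RNFAwtw α Q),
    A.NonRepetitive ∧ A.Deterministic ∧ A.lang = L

/-- The two-letter alphabet `{a, b}`. -/
inductive Letter : Type where
  | a : Letter
  | b : Letter
deriving DecidableEq

instance : Fintype Letter :=
  ⟨{Letter.a, Letter.b}, fun x => by cases x <;> simp⟩

/-- The word `u^m` (the `m`-fold concatenation of `u`). -/
def wpow {α : Type} (u : List α) (m : ℕ) : List α :=
  (List.replicate m u).flatten

/-- `L_2lin = { a^{2n} b^{2n} : n ≥ 1 }`. -/
def L2lin : Set (List Letter) :=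
  { w | ∃ n : ℕ, 1 ≤ n ∧
      w = List.replicate (2 * n) Letter.a ++ List.replicate (2 * n) Letter.b }


/-!
Every NFAwtw is an RNFAwtw, so only the separation needs work.

A non-repetitive accepting run reads the letters of a subsequence `σ` of its input along a path
of the underlying NFA and halts with an unread rest `wf` made of translucent words of the halting
state; appending further such words keeps the input accepted. As no word of `L2lin` has a proper
extension in `L2lin`, the rest is empty on `a^{2n} b^{2n}`. So the regular language of the
underlying NFA lies inside `L2lin` and contains words of every length `4n`, against the pumping
lemma.

A repetitive automaton can loop instead. Each round checks that the tape lies in `{aa, bb}*`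
and then erases the first `b` behind `(aa)*`, the first `a`, the first `b` behind `(aa)*ab` and
the first `a`, turning `a^{2n+2} b^{2n+2}` into `a^{2n} b^{2n}` for `n ≥ 1`; the word `aabb` is
read off directly. Conversely, the check forces a tape on which a round succeeds into the shape
`a^{2j+2} b b x b v`, the round leaving `a^{2j} b x v`, so by induction on the length every
accepted word lies in `L2lin`.
-/

open List

section InStar

variable {α : Type} {S : Set (List α)}

theorem InStar.nil : InStar S [] := ⟨[], by simp, rfl⟩

theorem InStar.of_mem {t : List α} (ht : t ∈ S) : InStar S t :=
  ⟨[t], by simpa using ht, by simp⟩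

theorem InStar.append {u v : List α} (hu : InStar S u) (hv : InStar S v) :
    InStar S (u ++ v) := by
  obtain ⟨l₁, h₁, rfl⟩ := hu
  obtain ⟨l₂, h₂, rfl⟩ := hv
  exact ⟨l₁ ++ l₂, by simpa [or_imp, forall_and] using ⟨h₁, h₂⟩, by simp⟩

@[simp] theorem inStar_empty_iff {u : List α} : InStar ∅ u ↔ u = [] := by
  refine ⟨?_, fun h => h ▸ InStar.nil⟩
  rintro ⟨l, hl, rfl⟩
  rw [eq_nil_iff_forall_not_mem.2 hl, flatten_nil]

theorem inStar_replicate_two_mul {x : α} (hx : [x, x] ∈ S) (k : ℕ) :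
    InStar S (replicate (2 * k) x) :=
  ⟨replicate k [x, x], by simpa [mem_replicate] using fun _ => hx,
    by simp [← flatten_replicate_replicate (m := 2), Nat.mul_comm]⟩

theorem exists_eq_replicate_of_inStar_pair {x : α} {u : List α} (hu : InStar {[x, x]} u) :
    ∃ k, u = replicate (2 * k) x := by
  obtain ⟨l, hl, rfl⟩ := hu
  refine ⟨l.length, ?_⟩
  rw [eq_replicate_iff.2 ⟨rfl, hl⟩, length_replicate, Nat.mul_comm]
  exact flatten_replicate_replicate (m := 2)

end InStar

theorem List.replicate_append_cons_inj {α : Type*} {x y : α} (hxy : x ≠ y) {i j : ℕ}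
    {s t : List α} : replicate i x ++ y :: s = replicate j x ++ y :: t ↔ i = j ∧ s = t := by
  induction i generalizing j with
  | zero => cases j <;> simp [replicate_succ, Ne.symm hxy]
  | succ i ih => cases j <;> simp [replicate_succ, hxy, ih]

theorem List.replicate_two_mul_eq_cons {α : Type*} {x : α} {m : ℕ} (hm : 1 ≤ m) :
    replicate (2 * m) x = x :: replicate (2 * m - 1) x := by
  rw [← replicate_succ]
  congr 1
  omega

namespace RNFAwtw

variable {α Q : Type}

def AcceptsFrom (A : RNFAwtw α Q) (q : Q) (w : List α) : Prop :=
  Relation.ReflTransGen A.Step (Conf.state q w) Conf.accept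

def toNFA (A : RNFAwtw α Q) : NFA α Q where
  step := A.delta
  start := A.init
  accept := {q | A.endB q = .accept}

variable {A : RNFAwtw α Q}

theorem not_reflTransGen_reject_accept : ¬ Relation.ReflTransGen A.Step .reject .accept := by
  intro h
  rcases h.cases_head with h | ⟨_, h, _⟩ <;> cases h

theorem acceptsFrom_iff {q : Q} {w : List α} :
    A.AcceptsFrom q w ↔
      (∃ u x v q', InStar (A.tl q) u ∧ q' ∈ A.delta q x ∧ w = u ++ x :: v ∧
        A.AcceptsFrom q' (u ++ v)) ∨
      (InStar (A.tl q) w ∧ A.endB q = .accept) ∨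
      (InStar (A.tl q) w ∧ ∃ S, A.endB q = .cont S ∧ ∃ q' ∈ S, A.AcceptsFrom q' w) := by
  constructor
  · intro h
    rcases h.cases_head with h | ⟨c, hstep, hc⟩
    · cases h
    cases hstep with
    | read hu hq' => exact .inl ⟨_, _, _, _, hu, hq', rfl, hc⟩
    | stuck => exact absurd hc not_reflTransGen_reject_accept
    | haltAccept hw he => exact .inr (.inl ⟨hw, he⟩)
    | haltReject => exact absurd hc not_reflTransGen_reject_accept
    | goOn hw he hq' => exact .inr (.inr ⟨hw, _, he, _, hq', hc⟩)
  · rintro (⟨u, x, v, q', hu, hq', rfl, h⟩ | ⟨hw, he⟩ | ⟨hw, S, he, q', hq', h⟩)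
    · exact .head (.read hu hq') h
    · exact .single (.haltAccept hw he)
    · exact .head (.goOn hw he hq') h

theorem acceptsFrom_iff_of_not_mem_delta {q : Q} {w : List α} (hδ : ∀ x p, p ∉ A.delta q x) :
    A.AcceptsFrom q w ↔ InStar (A.tl q) w ∧
      (A.endB q = .accept ∨ ∃ S, A.endB q = .cont S ∧ ∃ q' ∈ S, A.AcceptsFrom q' w) := by
  rw [acceptsFrom_iff]
  simp [hδ, and_or_left]

theorem acceptsFrom_iff_of_mem_delta_iff {q q' : Q} {x : α} {w : List α}
    (hδ : ∀ y p, p ∈ A.delta q y ↔ y = x ∧ p = q') (hend : A.endB q = .reject) :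
    A.AcceptsFrom q w ↔
      ∃ u v, InStar (A.tl q) u ∧ w = u ++ x :: v ∧ A.AcceptsFrom q' (u ++ v) := by
  rw [acceptsFrom_iff]
  simp [hδ, hend]

theorem acceptsFrom_of_mem_evalFrom {q qf : Q} {σ : List α}
    (hσ : qf ∈ A.toNFA.evalFrom {q} σ) (hqf : A.endB qf = .accept) : A.AcceptsFrom q σ := by
  induction σ generalizing q with
  | nil =>
    obtain rfl : qf = q := hσ
    exact .single (.haltAccept .nil hqf)
  | cons x σ ih =>
    rw [NFA.evalFrom_cons, NFA.stepSet_singleton, NFA.mem_evalFrom_iff_exists] at hσ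
    obtain ⟨q', hq', hσ⟩ := hσ
    exact acceptsFrom_iff.2 (.inl ⟨[], x, σ, q', .nil, hq', rfl, ih hσ⟩)

theorem mem_lang_of_mem_toNFA_accepts {σ : List α} (h : σ ∈ A.toNFA.accepts) : σ ∈ A.lang := by
  obtain ⟨qf, hqf, hσ⟩ := h
  obtain ⟨q, hq, hσ⟩ := NFA.mem_evalFrom_iff_exists.1 hσ
  exact ⟨q, hq, acceptsFrom_of_mem_evalFrom hσ hqf⟩

theorem NonRepetitive.exists_path_of_acceptsFrom (hA : A.NonRepetitive) {q : Q} {w : List α}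
    (h : A.AcceptsFrom q w) :
    ∃ σ qf wf, qf ∈ A.toNFA.evalFrom {q} σ ∧ A.endB qf = .accept ∧ InStar (A.tl qf) wf ∧
      σ.length + wf.length = w.length ∧
      ∀ X, InStar (A.tl qf) X → A.AcceptsFrom q (w ++ X) := by
  unfold AcceptsFrom at h
  generalize hc : Conf.state q w = c at h
  induction h using Relation.ReflTransGen.head_induction_on generalizing q w with
  | refl => cases hc
  | head hstep hrest ih =>
    subst hc
    cases hstep with
    | @read _ q' x u v hu hq' =>
      obtain ⟨σ, qf, wf, hσ, hqf, hwf, hlen, hX⟩ := ih rfl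
      refine ⟨x :: σ, qf, wf, ?_, hqf, hwf, ?_, fun X hX' => ?_⟩
      · rw [NFA.evalFrom_cons, NFA.stepSet_singleton, NFA.mem_evalFrom_iff_exists]
        exact ⟨q', hq', hσ⟩
      · simp only [length_append, length_cons] at hlen ⊢
        omega
      · simpa using acceptsFrom_iff.2
          (.inl ⟨u, x, v ++ X, q', hu, hq', by simp, by simpa using hX X hX'⟩)
    | stuck => exact absurd hrest not_reflTransGen_reject_accept
    | haltAccept hw he =>
      exact ⟨[], q, w, rfl, he, hw, by simp, fun X hX => .single (.haltAccept (hw.append hX) he)⟩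
    | haltReject => exact absurd hrest not_reflTransGen_reject_accept
    | goOn _ he => exact absurd he (hA _ _)

end RNFAwtw

open RNFAwtw

namespace L2lin

theorem eq_nil_of_append_mem {w t : List Letter} (hw : w ∈ L2lin) (hwt : w ++ t ∈ L2lin) :
    t = [] := by
  obtain ⟨n, hn, rfl⟩ := hw
  obtain ⟨N, hN, hwt⟩ := hwt
  rw [replicate_two_mul_eq_cons (x := Letter.b) hn, replicate_two_mul_eq_cons (x := Letter.b) hN,
    append_assoc, cons_append, replicate_append_cons_inj (by decide)] at hwt
  have := congrArg length hwt.2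
  simp only [length_append, length_replicate] at this
  exact length_eq_zero_iff.1 (by omega)

theorem length_lt_of_mem_accepts {σ : Type} [Fintype σ] {M : NFA Letter σ}
    (hM : ∀ w ∈ M.accepts, w ∈ L2lin) {w : List Letter} (hw : w ∈ M.accepts) :
    w.length < 2 * Fintype.card (Set σ) := by
  by_contra! hlen
  obtain ⟨n, hn, rfl⟩ := hM w hw
  simp only [length_append, length_replicate] at hlen
  obtain ⟨p, q, r, hpqr, hpq, hq, hpump⟩ :=
    NFA.pumping_lemma hw (by simp only [length_append, length_replicate]; omega)
  obtain ⟨N, -, hpr⟩ := hM (p ++ r) <| hpump <|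
    Language.mem_mul.2 ⟨p, Language.mem_mul.2 ⟨p, rfl, [], Language.nil_mem_kstar _, by simp⟩,
      r, rfl, rfl⟩
  have hq_a : q = replicate q.length .a := by
    have : p ++ q <+: replicate (2 * n) .a :=
      prefix_of_prefix_length_le (by rw [hpqr]; exact prefix_append _ _) (prefix_append _ _)
        (by simp only [length_append, length_replicate] at hpq ⊢; omega)
    exact (append_eq_replicate_iff.1 (prefix_replicate_iff.1 this).2).2.2
  have hq_len : q.length ≠ 0 := by simpa using hq
  have ha := congrArg (count .a) hpqr
  have hb := congrArg (count .b) hpqr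
  have ha' := congrArg (count .a) hpr
  have hb' := congrArg (count .b) hpr
  rw [hq_a] at ha hb
  simp only [count_append, count_replicate_self, count_replicate, beq_iff_eq, reduceCtorEq,
    ↓reduceIte, add_zero, zero_add, append_assoc] at ha hb ha' hb'
  omega

theorem replicate_append_mem {j : ℕ} {x v : List Letter}
    (h : replicate (2 * j) .a ++ .b :: (x ++ v) ∈ L2lin) :
    replicate (2 * j + 2) .a ++ .b :: .b :: (x ++ .b :: v) ∈ L2lin := by
  obtain ⟨m, hm, h⟩ := h
  rw [replicate_two_mul_eq_cons (x := Letter.b) hm, replicate_append_cons_inj (by decide),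
    append_eq_replicate_iff] at h
  obtain ⟨hjm, hlen, hx, hv⟩ := h
  obtain rfl : j = m := by omega
  refine ⟨j + 1, by omega, ?_⟩
  rw [hx, hv]
  simp only [← replicate_succ, replicate_append_replicate]
  congr 2
  omega

end L2lin

theorem L2lin_not_acceptedByNFAwtw : ¬ AcceptedByNFAwtw L2lin := by
  rintro ⟨Q, _, A, hA, hL⟩
  have := Fintype.ofFinite Q
  set n := Fintype.card (Set Q)
  obtain ⟨q₀, hq₀, hacc⟩ : replicate (2 * n) .a ++ replicate (2 * n) .b ∈ A.lang :=
    hL ▸ ⟨n, Fintype.card_pos, rfl⟩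
  have hmem {v} (h : A.AcceptsFrom q₀ v) : v ∈ L2lin := hL ▸ ⟨q₀, hq₀, h⟩
  obtain ⟨σ, qf, wf, hσ, hqf, hwf, hlen, hext⟩ := hA.exists_path_of_acceptsFrom hacc
  obtain rfl : wf = [] := L2lin.eq_nil_of_append_mem (hmem hacc) (hmem (hext wf hwf))
  have hσ : σ ∈ A.toNFA.accepts := ⟨qf, hqf, NFA.mem_evalFrom_iff_exists.2 ⟨q₀, hq₀, hσ⟩⟩
  have := L2lin.length_lt_of_mem_accepts (fun w hw => hL ▸ mem_lang_of_mem_toNFA_accepts hw) hσ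
  simp only [length_nil, add_zero, length_append, length_replicate] at hlen
  omega

theorem Letter.exists_iff {p : Letter → Prop} : (∃ x, p x) ↔ p .a ∨ p .b :=
  ⟨fun ⟨x, hx⟩ => by cases x <;> simp [hx], fun h => h.elim (⟨_, ·⟩) (⟨_, ·⟩)⟩

namespace L2lin

inductive State : Type
  | s0 | q1 | p1 | q2 | p2 | e1 | e2 | e3 | e4 | e5
  deriving DecidableEq

instance : Fintype State :=
  ⟨{.s0, .q1, .p1, .q2, .p2, .e1, .e2, .e3, .e4, .e5}, fun q => by cases q <;> simp⟩

def tl : State → Set (List Letter)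
  | .s0 => {[.a, .a], [.b, .b]}
  | .q1 => {[.a, .a]}
  | .q2 => {[.a, .a], [.a, .b]}
  | _ => ∅

def next : State → Letter → Option State
  | .q1, .b => some .p1
  | .p1, .a => some .q2
  | .q2, .b => some .p2
  | .p2, .a => some .s0
  | .e1, .a => some .e2
  | .e2, .a => some .e3
  | .e3, .b => some .e4
  | .e4, .b => some .e5
  | _, _ => none

def endB : State → EndBehavior State
  | .s0 => .cont {.q1, .e1}
  | .e5 => .accept
  | _ => .reject

def automaton : RNFAwtw Letter State where
  init := {.s0}
  tl := tl
  delta q x := {p | next q x = some p}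
  endB := endB
  tl_fin q := by cases q <;> simp [tl]
  code_ne q := by cases q <;> simp [tl]
  prefix_code q := by cases q <;> simp [tl, next, Letter.exists_iff, Set.Nonempty]
  tl_head q := by cases q <;> simp [tl, Set.Nonempty] <;> decide

variable {w : List Letter}

theorem mem_automaton_delta {q p : State} {x : Letter} :
    p ∈ automaton.delta q x ↔ next q x = some p :=
  Iff.rfl

theorem acceptsFrom_iff_of_next {q q' : State} {x : Letter} (htl : tl q = ∅)
    (hnext : ∀ y p, next q y = some p ↔ y = x ∧ p = q') (hend : endB q = .reject) :
    automaton.AcceptsFrom q w ↔ ∃ v, w = x :: v ∧ automaton.AcceptsFrom q' v := by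
  have htl' : automaton.tl q = ∅ := htl
  simp [acceptsFrom_iff_of_mem_delta_iff (A := automaton) hnext hend, htl']

theorem acceptsFrom_s0 : automaton.AcceptsFrom .s0 w ↔
    InStar (tl .s0) w ∧ (automaton.AcceptsFrom .q1 w ∨ automaton.AcceptsFrom .e1 w) := by
  rw [acceptsFrom_iff_of_not_mem_delta (by simp only [mem_automaton_delta]; decide)]
  simp [automaton, endB]

theorem acceptsFrom_q1 : automaton.AcceptsFrom .q1 w ↔
    ∃ u v, InStar (tl .q1) u ∧ w = u ++ .b :: v ∧ automaton.AcceptsFrom .p1 (u ++ v) :=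
  acceptsFrom_iff_of_mem_delta_iff (by simp only [mem_automaton_delta]; decide) rfl

theorem acceptsFrom_p1 :
    automaton.AcceptsFrom .p1 w ↔ ∃ v, w = .a :: v ∧ automaton.AcceptsFrom .q2 v :=
  acceptsFrom_iff_of_next rfl (by decide) rfl

theorem acceptsFrom_q2 : automaton.AcceptsFrom .q2 w ↔
    ∃ u v, InStar (tl .q2) u ∧ w = u ++ .b :: v ∧ automaton.AcceptsFrom .p2 (u ++ v) :=
  acceptsFrom_iff_of_mem_delta_iff (by simp only [mem_automaton_delta]; decide) rfl

theorem acceptsFrom_p2 :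
    automaton.AcceptsFrom .p2 w ↔ ∃ v, w = .a :: v ∧ automaton.AcceptsFrom .s0 v :=
  acceptsFrom_iff_of_next rfl (by decide) rfl

theorem acceptsFrom_e5 : automaton.AcceptsFrom .e5 w ↔ w = [] := by
  rw [acceptsFrom_iff_of_not_mem_delta (by simp only [mem_automaton_delta]; decide)]
  simp [automaton, endB, tl]

theorem acceptsFrom_e1 : automaton.AcceptsFrom .e1 w ↔ w = [.a, .a, .b, .b] := by
  simp [acceptsFrom_iff_of_next (q := .e1) (x := .a) (q' := .e2) rfl (by decide) rfl,
    acceptsFrom_iff_of_next (q := .e2) (x := .a) (q' := .e3) rfl (by decide) rfl,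
    acceptsFrom_iff_of_next (q := .e3) (x := .b) (q' := .e4) rfl (by decide) rfl,
    acceptsFrom_iff_of_next (q := .e4) (x := .b) (q' := .e5) rfl (by decide) rfl,
    acceptsFrom_e5]

theorem eq_cons_of_inStar_tl_s0 {k : ℕ} {v : List Letter}
    (h : InStar (tl .s0) (replicate (2 * k) .a ++ .b :: v)) : ∃ v', v = .b :: v' := by
  obtain ⟨l, hl, he⟩ := h
  induction l generalizing k with
  | nil => simp at he
  | cons t l ih =>
    simp only [tl, forall_mem_cons, Set.mem_insert_iff, Set.mem_singleton_iff] at hl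
    obtain ⟨rfl | rfl, hl⟩ := hl
    · cases k with
      | zero => simp at he
      | succ k => exact ih hl (by simpa [Nat.mul_succ, replicate_succ] using he)
    · cases k with
      | zero => exact ⟨l.flatten, by simpa [eq_comm] using he⟩
      | succ k => simp [Nat.mul_succ, replicate_succ] at he

theorem eq_append_of_inStar_tl_q2 {j : ℕ} {u s t : List Letter} (hu : InStar (tl .q2) u)
    (h : u ++ .b :: s = replicate (2 * j + 1) .a ++ .b :: t) :
    ∃ x, u = replicate (2 * j + 1) .a ++ .b :: x := by
  obtain ⟨l, hl, rfl⟩ := hu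
  induction l generalizing j with
  | nil => simp [replicate_succ] at h
  | cons p l ih =>
    simp only [tl, forall_mem_cons, Set.mem_insert_iff, Set.mem_singleton_iff] at hl
    obtain ⟨rfl | rfl, hl⟩ := hl
    · cases j with
      | zero => simp at h
      | succ j =>
        obtain ⟨x, hx⟩ := ih hl (by simpa [Nat.mul_succ, replicate_succ] using h)
        exact ⟨x, by simp [hx, Nat.mul_succ, replicate_succ]⟩
    · cases j with
      | zero => exact ⟨l.flatten, by simp⟩
      | succ j => simp [Nat.mul_succ, replicate_succ] at h

theorem exists_round_of_acceptsFrom_q1 (hw : InStar (tl .s0) w)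
    (hq₁ : automaton.AcceptsFrom .q1 w) :
    ∃ j x v, w = replicate (2 * j + 2) .a ++ .b :: .b :: (x ++ .b :: v) ∧
      automaton.AcceptsFrom .s0 (replicate (2 * j) .a ++ .b :: (x ++ v)) := by
  obtain ⟨u, v, hu, rfl, hp₁⟩ := acceptsFrom_q1.1 hq₁
  obtain ⟨k, rfl⟩ := exists_eq_replicate_of_inStar_pair hu
  obtain ⟨v, rfl⟩ := eq_cons_of_inStar_tl_s0 hw
  obtain ⟨w₂, hw₂, hq₂⟩ := acceptsFrom_p1.1 hp₁
  obtain ⟨j, rfl⟩ : ∃ j, k = j + 1 := Nat.exists_eq_add_one.2 <| Nat.pos_of_ne_zero <| by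
    rintro rfl
    simp at hw₂
  obtain rfl : w₂ = replicate (2 * j + 1) .a ++ .b :: v := by
    simpa [Nat.mul_succ, replicate_succ] using hw₂.symm
  obtain ⟨u₂, v₂, hu₂, hw₂, hp₂⟩ := acceptsFrom_q2.1 hq₂
  obtain ⟨x, rfl⟩ := eq_append_of_inStar_tl_q2 hu₂ hw₂.symm
  obtain ⟨w₃, hw₃, hs₀⟩ := acceptsFrom_p2.1 hp₂
  obtain rfl : v = x ++ .b :: v₂ := by simpa using hw₂
  obtain rfl : w₃ = replicate (2 * j) .a ++ .b :: (x ++ v₂) := by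
    simpa [replicate_succ] using hw₃.symm
  exact ⟨j, x, v₂, by simp [Nat.mul_succ], hs₀⟩

theorem mem_of_acceptsFrom_s0 (h : automaton.AcceptsFrom .s0 w) : w ∈ L2lin := by
  induction hlen : w.length using Nat.strong_induction_on generalizing w with
  | _ n ih =>
    obtain ⟨hw, hq₁ | he₁⟩ := acceptsFrom_s0.1 h
    · obtain ⟨j, x, v, rfl, hs₀⟩ := exists_round_of_acceptsFrom_q1 hw hq₁
      refine replicate_append_mem (ih _ ?_ hs₀ rfl)
      simp only [length_append, length_replicate, length_cons] at hlen ⊢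
      omega
    · rw [acceptsFrom_e1.1 he₁]
      exact ⟨1, le_rfl, rfl⟩

theorem inStar_tl_s0 (n : ℕ) :
    InStar (tl .s0) (replicate (2 * n) .a ++ replicate (2 * n) .b) :=
  (inStar_replicate_two_mul (by simp [tl]) n).append (inStar_replicate_two_mul (by simp [tl]) n)

theorem acceptsFrom_s0_of_mem (h : w ∈ L2lin) : automaton.AcceptsFrom .s0 w := by
  obtain ⟨n, hn, rfl⟩ := h
  obtain ⟨m, rfl⟩ := Nat.exists_eq_add_of_le' hn
  refine acceptsFrom_s0.2 ⟨inStar_tl_s0 _, ?_⟩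
  clear hn
  induction m with
  | zero => exact .inr (acceptsFrom_e1.2 rfl)
  | succ m ih =>
    have hu₂ : InStar (tl .q2) (replicate (2 * m + 3) .a ++ [.b]) := by
      rw [show replicate (2 * m + 3) Letter.a ++ [.b] = replicate (2 * m + 2) .a ++ [.a, .b] by
        simp [replicate_succ']]
      exact (inStar_replicate_two_mul (by simp [tl]) (m + 1)).append (.of_mem (by simp [tl]))
    refine .inl <| acceptsFrom_q1.2 ⟨replicate (2 * (m + 2)) .a, replicate (2 * m + 3) .b,
      inStar_replicate_two_mul (by simp [tl]) (m + 2), by simp [Nat.mul_succ, replicate_succ],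
      acceptsFrom_p1.2 ⟨replicate (2 * m + 3) .a ++ replicate (2 * m + 3) .b,
        by simp [Nat.mul_succ, replicate_succ],
      acceptsFrom_q2.2 ⟨_, replicate (2 * m + 1) .b, hu₂, by simp [replicate_succ],
      acceptsFrom_p2.2 ⟨replicate (2 * (m + 1)) .a ++ replicate (2 * (m + 1)) .b,
        by simp [Nat.mul_succ, replicate_succ], acceptsFrom_s0.2 ⟨inStar_tl_s0 _, ih⟩⟩⟩⟩⟩

theorem lang_automaton : automaton.lang = L2lin := by
  ext w
  exact ⟨fun ⟨q, hq, h⟩ => mem_of_acceptsFrom_s0 (hq ▸ h),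
    fun h => ⟨.s0, rfl, acceptsFrom_s0_of_mem h⟩⟩

end L2lin

/-- The class of NFAwtw languages is properly contained in the class of
RNFAwtw languages: every NFAwtw language is an RNFAwtw language, and
`L_2lin = { a^{2n} b^{2n} : n ≥ 1 }` is an RNFAwtw language that is not an
NFAwtw language. -/
theorem NFAwtw_lt_RNFAwtw :
    (∀ (α : Type), Finite α →
      ∀ L : Set (List α), AcceptedByNFAwtw L → AcceptedByRNFAwtw L) ∧
    AcceptedByRNFAwtw L2lin ∧ ¬ AcceptedByNFAwtw L2lin :=
  ⟨fun _ _ _ ⟨Q, hQ, A, _, hL⟩ => ⟨Q, hQ, A, hL⟩, ⟨_, inferInstance, _, L2lin.lang_automaton⟩,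
    L2lin_not_acceptedByNFAwtw⟩
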